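/- Let S be a nonempty subset of [m] and let V be a finitely generated C^m_G-module generated by its slice V[[s]] for some object s of C^S. If t_1^S(V) ≤ t_0^S(V), then V is S-induced. -/

import Mathlib

open CategoryTheory Limits
open scoped TensorProduct
noncomputable section

@[ext] structure FIObj where
  n : ℕ

instance : Category FIObj where
  Hom a b := Fin a.n ↪ Fin b.n
  id _ := Function.Embedding.refl _
  comp f g := f.trans g

@[ext] structure FImObj (m : ℕ) where
  comp : Fin m → ℕ

instance (m : ℕ) : Category (FImObj m) where
  Hom x y := ∀ j, Fin (x.comp j) ↪ Fin (y.comp j)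
  id _ := fun _ => Function.Embedding.refl _
  comp f g := fun j => (f j).trans (g j)

abbrev FImG (m : ℕ) (G : Type) [Group G] := FImObj m × CategoryTheory.SingleObj G

@[simp] lemma FImObj.comp_def {m : ℕ} {x y z : FImObj m} (f : x ⟶ y) (g : y ⟶ z) (j : Fin m) :
    (f ≫ g) j = (f j).trans (g j) := rfl

@[simp] lemma FImObj.id_def {m : ℕ} (x : FImObj m) (j : Fin m) :
    (𝟙 x : x ⟶ x) j = Function.Embedding.refl _ := rfl

def shiftEmb (K : ℕ) {a b : ℕ} (f : Fin a ↪ Fin b) : Fin (a + K) ↪ Fin (b + K) :=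
  finSumFinEquiv.symm.toEmbedding.trans
    ((f.sumMap (Function.Embedding.refl (Fin K))).trans finSumFinEquiv.toEmbedding)

@[simp] lemma shiftEmb_castAdd (K : ℕ) {a b : ℕ} (f : Fin a ↪ Fin b) (x : Fin a) :
    shiftEmb K f (Fin.castAdd K x) = Fin.castAdd K (f x) := by
  simp [shiftEmb]

lemma shiftEmb_id (K a : ℕ) :
    shiftEmb K (Function.Embedding.refl (Fin a)) = Function.Embedding.refl _ := by
  ext x
  obtain ⟨y, rfl⟩ := finSumFinEquiv.surjective x
  cases y <;> simp [shiftEmb]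

lemma shiftEmb_trans (K : ℕ) {a b c : ℕ} (f : Fin a ↪ Fin b) (g : Fin b ↪ Fin c) :
    shiftEmb K (f.trans g) = (shiftEmb K f).trans (shiftEmb K g) := by
  ext x
  obtain ⟨y, rfl⟩ := finSumFinEquiv.surjective x
  cases y <;> simp [shiftEmb]

def addF (m : ℕ) (e : Fin m → ℕ) : FImObj m ⥤ FImObj m where
  obj x := ⟨fun j => x.comp j + e j⟩
  map f := fun j => shiftEmb (e j) (f j)
  map_id x := funext fun j => shiftEmb_id _ _
  map_comp f g := funext fun j => shiftEmb_trans _ _ _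

variable (m : ℕ) (G : Type) [Group G] (k : Type) [Field k]

/-- The `i`-th self-embedding functor `ι_i` (more generally, the self-embedding functor
attached to a vector `e` of shifts), extended to `C^m_G` by the identity on `G`. -/
def addFG (e : Fin m → ℕ) : FImG m G ⥤ FImG m G := (addF m e).prod (𝟭 _)

/-- The category of `C^m_G`-modules over `k`, i.e. of functors `C^m_G ⥤ Vect_k`. -/
abbrev ModG := FImG m G ⥤ ModuleCat.{0} k

instance : HasFiniteBiproducts (ModG m G k) := Abelian.hasFiniteBiproducts

/-- The shift functor attached to a shift vector `e`, given by precomposition with the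
self-embedding functor; `Σ_i` is recovered as `e = Pi.single i 1`. -/
def sigmaF (e : Fin m → ℕ) : ModG m G k ⥤ ModG m G k :=
  (Functor.whiskeringLeft _ _ _).obj (addFG m G e)

/-- The canonical morphism `x ⟶ ι_e(x)` in `C^m_G`. -/
def incHom (e : Fin m → ℕ) (x : FImG m G) : x ⟶ (addFG m G e).obj x :=
  (fun j => ⟨Fin.castAdd (e j), fun u v huv => Fin.castAdd_injective _ _ huv⟩, (1 : G))

lemma incHom_naturality (e : Fin m → ℕ) {x y : FImG m G} (f : x ⟶ y) :
    incHom m G e x ≫ (addFG m G e).map f = f ≫ incHom m G e y := by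
  refine Prod.ext ?_ ?_
  · funext j
    ext t
    exact congrArg Fin.val (shiftEmb_castAdd (e j) (f.1 j) t)
  · simp [incHom, addFG, CategoryTheory.SingleObj.comp_as_mul]

/-- The natural inclusion `V ⟶ Σ_e V`. -/
def incMapV (e : Fin m → ℕ) (V : ModG m G k) : V ⟶ (sigmaF m G k e).obj V where
  app x := V.map (incHom m G e x)
  naturality x y f := by
    dsimp [sigmaF]
    rw [← V.map_comp, ← V.map_comp, incHom_naturality]

/-- The natural transformation `𝟭 ⟶ Σ_e` on the category of `C^m_G`-modules. -/
def incNat (e : Fin m → ℕ) : 𝟭 (ModG m G k) ⟶ sigmaF m G k e where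
  app V := incMapV m G k e V
  naturality V W φ := by
    apply NatTrans.ext; funext x
    exact (φ.naturality (incHom m G e x)).symm

/-- The kernel functor value `K_e V`, the kernel of the natural map `V ⟶ Σ_e V`;
the `i`-th kernel functor `K_i` of the paper is recovered with `e = Pi.single i 1`. -/
def Kobj (e : Fin m → ℕ) (V : ModG m G k) : ModG m G k :=
  kernel (incMapV m G k e V)

/-- The derivative functor `D_e`, sending `V` to the cokernel of `V ⟶ Σ_e V`;
the `i`-th derivative functor `D_i` of the paper is recovered with `e = Pi.single i 1`. -/
def Dfun (e : Fin m → ℕ) : ModG m G k ⥤ ModG m G k where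
  obj V := cokernel (incMapV m G k e V)
  map {V W} φ := cokernel.map _ _ φ ((sigmaF m G k e).map φ)
    ((incNat m G k e).naturality φ).symm
  map_id X := coequalizer.hom_ext (by simp [cokernel.map])
  map_comp f g := coequalizer.hom_ext (by simp [cokernel.map])

instance sigmaF_additive (e : Fin m → ℕ) : (sigmaF m G k e).Additive :=
  ⟨by intros; apply NatTrans.ext; funext x; rfl⟩

instance Dfun_pzm (e : Fin m → ℕ) : (Dfun m G k e).PreservesZeroMorphisms where
  map_zero X Y := coequalizer.hom_ext (by simp [Dfun, cokernel.map]; exact comp_zero.symm)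

/-- The functor `D_S = ⊕_{i ∈ S} D_i`. -/
def DSfun (S : Finset (Fin m)) : ModG m G k ⥤ ModG m G k where
  obj V := ⨁ (fun i : {i // i ∈ S} => (Dfun m G k (Pi.single i.1 1)).obj V)
  map φ := biproduct.map (fun i => (Dfun m G k (Pi.single i.1 1)).map φ)
  map_id X := by ext i; simp
  map_comp f g := by ext i; simp

instance DSfun_pzm (S : Finset (Fin m)) : (DSfun m G k S).PreservesZeroMorphisms where
  map_zero X Y := by
    apply biproduct.hom_ext
    intro i
    simp [DSfun]
    exact zero_comp.symm

/-- The `S`-degree of a morphism `α : x ⟶ y` in `C^m_G`: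
`deg_S(α) = ∑_{i ∈ S} (y_i − x_i)`. -/
def degS (S : Finset (Fin m)) {x y : FImG m G} (_ : x ⟶ y) : ℤ :=
  ∑ i ∈ S, ((y.1.comp i : ℤ) - (x.1.comp i : ℤ))

/-- An element `v ∈ V(x)` is `S`-torsion if some morphism `α` with `deg_S(α) > 0` and
`deg_{[m]∖S}(α) = 0` kills it. -/
def IsTorsionElt (S : Finset (Fin m)) (V : ModG m G k) {x : FImG m G} (v : V.obj x) : Prop :=
  ∃ (y : FImG m G) (α : x ⟶ y),
    0 < degS m G S α ∧ degS m G Sᶜ α = 0 ∧ V.map α v = 0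

/-- A `C^m_G`-module is `S`-torsion free if it has no nonzero `S`-torsion element. -/
def STorsionFree (S : Finset (Fin m)) (V : ModG m G k) : Prop :=
  ∀ (x : FImG m G) (v : V.obj x), IsTorsionElt m G k S V v → v = 0

/-- The free (projective) module `M(x)`, the `k`-linearization of the representable
functor at the object `x`. -/
def RepM (x : FImG m G) : ModG m G k :=
  coyoneda.obj (Opposite.op x) ⋙ ModuleCat.free k

/-- A `C^m_G`-module is finitely generated if it is a quotient of a finite direct sum
of linearizations of representable functors. -/
def FinitelyGenerated (V : ModG m G k) : Prop :=
  ∃ (r : ℕ) (xs : Fin r → FImG m G) (p : (⨁ fun a => RepM m G k (xs a)) ⟶ V), Epi p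

/-- The subcategory `R_s = Aut(s) × C^{[m]∖S}_G` of `C^m_G`, realized as the full
subcategory of objects whose `S`-coordinates agree with `s`. -/
def Rcat (S : Finset (Fin m)) (s : Fin m → ℕ) :=
  CategoryTheory.ObjectProperty.FullSubcategory (fun x : FImG m G => ∀ j ∈ S, x.1.comp j = s j)

instance (S : Finset (Fin m)) (s : Fin m → ℕ) : Category (Rcat m G S s) :=
  CategoryTheory.ObjectProperty.FullSubcategory.category _

/-- The inclusion `R_s ↪ C^m_G`. -/
def inclR (S : Finset (Fin m)) (s : Fin m → ℕ) : Rcat m G S s ⥤ FImG m G :=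
  ObjectProperty.ι _

set_option synthInstance.maxHeartbeats 1000000 in
instance hasLKE (S : Finset (Fin m)) (s : Fin m → ℕ) (F : Rcat m G S s ⥤ ModuleCat.{0} k) :
    (inclR m G S s).HasLeftKanExtension F := inferInstance

/-- The induction functor `F_s = M̄(s) ⊗_{R_s} −`, realized as the left Kan extension
along the inclusion `R_s ↪ C^m_G`. -/
def indF (S : Finset (Fin m)) (s : Fin m → ℕ) :
    (Rcat m G S s ⥤ ModuleCat.{0} k) ⥤ ModG m G k :=
  (inclR m G S s).lan

/-- A module is `S`-induced if it is isomorphic to `F_s(W)` for some object `s` of `C^S`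
and some `R_s`-module `W`. -/
def IsInduced (S : Finset (Fin m)) (V : ModG m G k) : Prop :=
  ∃ (s : Fin m → ℕ) (W : Rcat m G S s ⥤ ModuleCat.{0} k),
    Nonempty (V ≅ (indF m G k S s).obj W)

/-- A module is `S`-semi-induced if it has a finite filtration whose successive quotients
are `S`-induced; equivalently (inductively): a zero module is `S`-semi-induced, and any
extension of an `S`-induced module by an `S`-semi-induced module is `S`-semi-induced. -/
inductive IsSemiInduced (S : Finset (Fin m)) : ModG m G k → Prop
  | of_isZero (V : ModG m G k) : Limits.IsZero V → IsSemiInduced S V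
  | step (sc : ShortComplex (ModG m G k)) : sc.ShortExact → IsSemiInduced S sc.X₁ →
      IsInduced m G k S sc.X₃ → IsSemiInduced S sc.X₂

/-- `V` is generated by its slice `V[[s]]` iff the counit `F_s(V[[s]]) ⟶ V` of the
Kan-extension adjunction (induction ⊣ restriction) is an epimorphism. -/
def GeneratedBySlice (S : Finset (Fin m)) (s : Fin m → ℕ) (V : ModG m G k) : Prop :=
  Epi ((((inclR m G S s).lanAdjunction (ModuleCat.{0} k)).counit).app V)

lemma comp_le_of_hom {x y : FImG m G} (f : x ⟶ y) (i : Fin m) :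
    x.1.comp i ≤ y.1.comp i := by
  simpa using Fintype.card_le_of_embedding (f.1 i)

lemma degS_nonneg (S : Finset (Fin m)) {x y : FImG m G} (f : x ⟶ y) :
    0 ≤ degS m G S f := by
  refine Finset.sum_nonneg fun i _ => ?_
  have := comp_le_of_hom m G f i
  omega

lemma degS_comp (S : Finset (Fin m)) {x y z : FImG m G} (f : x ⟶ y) (g : y ⟶ z) :
    degS m G S (f ≫ g) = degS m G S f + degS m G S g := by
  rw [degS, degS, degS, ← Finset.sum_add_distrib]
  exact Finset.sum_congr rfl fun i _ => by ring

/-- The value at `x` of the submodule `𝔍_S V ⊆ V`, where `𝔍_S` is the two-sided ideal of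
the category algebra spanned by all morphisms of positive `S`-degree. -/
def Jsub (S : Finset (Fin m)) (V : ModG m G k) (x : FImG m G) : Submodule k (V.obj x) :=
  ⨆ (y : FImG m G) (α : y ⟶ x) (_ : 0 < degS m G S α), LinearMap.range (V.map α).hom

lemma Jsub_le_comap (S : Finset (Fin m)) (V : ModG m G k) {x x' : FImG m G} (f : x ⟶ x') :
    Jsub m G k S V x ≤ (Jsub m G k S V x').comap (V.map f).hom := by
  refine iSup_le fun y => iSup_le fun α => iSup_le fun hα => ?_
  rintro v ⟨w, rfl⟩
  have h1 : V.map f (V.map α w) = V.map (α ≫ f) w := by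
    rw [V.map_comp]; rfl
  have h2 : 0 < degS m G S (α ≫ f) := by
    rw [degS_comp]
    have := degS_nonneg m G S f
    omega
  refine Submodule.mem_comap.2 ?_
  rw [h1]
  exact Submodule.mem_iSup_of_mem y (Submodule.mem_iSup_of_mem (α ≫ f)
    (Submodule.mem_iSup_of_mem h2 ⟨w, rfl⟩))

lemma Jsub_le_comap_app (S : Finset (Fin m)) {V W : ModG m G k} (φ : V ⟶ W) (x : FImG m G) :
    Jsub m G k S V x ≤ (Jsub m G k S W x).comap (φ.app x).hom := by
  refine iSup_le fun y => iSup_le fun α => iSup_le fun hα => ?_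
  rintro v ⟨w, rfl⟩
  have h1 : φ.app x (V.map α w) = W.map α (φ.app y w) := by
    have := φ.naturality α
    exact congrFun (congrArg (fun (t : V.obj y ⟶ W.obj x) => ⇑t) this) w
  refine Submodule.mem_comap.2 ?_
  rw [h1]
  exact Submodule.mem_iSup_of_mem y (Submodule.mem_iSup_of_mem α
    (Submodule.mem_iSup_of_mem hα ⟨_, rfl⟩))

/-- The value of `H_0^S(V) = V/𝔍_S V` as a `C^m_G`-module. -/
def H0Sobj (S : Finset (Fin m)) (V : ModG m G k) : ModG m G k where
  obj x := ModuleCat.of k (V.obj x ⧸ Jsub m G k S V x)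
  map {x x'} f := ModuleCat.ofHom (Submodule.mapQ _ _ (V.map f).hom (Jsub_le_comap m G k S V f))
  map_id x := by
    apply ModuleCat.hom_ext
    apply Submodule.linearMap_qext
    ext v
    show Submodule.Quotient.mk ((V.map (𝟙 x)).hom v) = Submodule.Quotient.mk v
    rw [V.map_id]
    rfl
  map_comp {x y z} f g := by
    apply ModuleCat.hom_ext
    apply Submodule.linearMap_qext
    ext v
    show Submodule.Quotient.mk ((V.map (f ≫ g)).hom v)
      = Submodule.Quotient.mk ((V.map g).hom ((V.map f).hom v))
    rw [V.map_comp]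
    rfl

/-- The functor `H_0^S`, sending `V` to `V/𝔍_S V`. -/
def H0S (S : Finset (Fin m)) : ModG m G k ⥤ ModG m G k where
  obj V := H0Sobj m G k S V
  map {V W} φ :=
    { app := fun x => ModuleCat.ofHom (Submodule.mapQ _ _ (φ.app x).hom (Jsub_le_comap_app m G k S φ x))
      naturality := fun x y f => by
        apply ModuleCat.hom_ext
        apply Submodule.linearMap_qext
        ext v
        have := φ.naturality f
        have h1 : (φ.app y).hom ((V.map f).hom v) = (W.map f).hom ((φ.app x).hom v) :=
          congrFun (congrArg (fun (t : V.obj x ⟶ W.obj y) => ⇑t.hom) this) v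
        show Submodule.Quotient.mk ((φ.app y).hom ((V.map f).hom v))
          = Submodule.Quotient.mk ((W.map f).hom ((φ.app x).hom v))
        rw [h1] }
  map_id V := by
    apply NatTrans.ext; funext x
    apply ModuleCat.hom_ext
    apply Submodule.linearMap_qext
    ext v
    rfl
  map_comp {U V W} φ ψ := by
    apply NatTrans.ext; funext x
    apply ModuleCat.hom_ext
    apply Submodule.linearMap_qext
    ext v
    rfl

instance (S : Finset (Fin m)) : (H0S m G k S).Additive where
  map_add := by
    intro V W φ ψ
    apply NatTrans.ext; funext x
    apply ModuleCat.hom_ext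
    apply Submodule.linearMap_qext
    ext v
    rfl

/-- The free module `M(x) ⊗ W` on a vector space `W` placed at the object `x`. -/
def freeAt (x : FImG m G) (W : ModuleCat.{0} k) : ModG m G k where
  obj y := ModuleCat.of k ((x ⟶ y) →₀ W)
  map {y z} g := ModuleCat.ofHom (Finsupp.lmapDomain W k (fun α => α ≫ g))
  map_id y := by
    have h : (fun α : x ⟶ y => α ≫ 𝟙 y) = id := funext fun α => Category.comp_id α
    apply ModuleCat.hom_ext
    show Finsupp.lmapDomain W k (fun α : x ⟶ y => α ≫ 𝟙 y) = _
    rw [h, Finsupp.lmapDomain_id]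
    rfl
  map_comp {y z w} g h := by
    have hc : (fun α : x ⟶ y => α ≫ (g ≫ h)) = (fun β : x ⟶ z => β ≫ h) ∘ (fun α : x ⟶ y => α ≫ g) :=
      funext fun α => (Category.assoc α g h).symm
    apply ModuleCat.hom_ext
    show Finsupp.lmapDomain W k (fun α : x ⟶ y => α ≫ (g ≫ h)) = _
    rw [hc, Finsupp.lmapDomain_comp]
    rfl

/-- The universal property map out of `freeAt x W`. -/
def fromFree {x : FImG m G} {W : ModuleCat.{0} k} {N : ModG m G k} (φ : W →ₗ[k] N.obj x) :
    freeAt m G k x W ⟶ N where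
  app y := ModuleCat.ofHom (Finsupp.lsum k (fun α : x ⟶ y => (N.map α).hom.comp φ))
  naturality {y z} g := by
    apply ModuleCat.hom_ext
    apply Finsupp.lhom_ext
    intro α w
    show Finsupp.lsum k (fun β : x ⟶ z => (N.map β).hom.comp φ)
        (Finsupp.mapDomain (fun β => β ≫ g) (Finsupp.single α w))
      = (N.map g).hom ((Finsupp.lsum k (fun β : x ⟶ y => (N.map β).hom.comp φ)) (Finsupp.single α w))
    rw [Finsupp.mapDomain_single]
    simp only [Finsupp.lsum_single, LinearMap.comp_apply]
    rw [N.map_comp]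
    rfl

instance freeAt_projective (x : FImG m G) (W : ModuleCat.{0} k) :
    Projective (freeAt m G k x W) where
  factors {E X} f e he := by
    have hsurj : Function.Surjective (e.app x) := by
      rw [← ModuleCat.epi_iff_surjective]
      infer_instance
    haveI : Module.Projective k W := Module.Projective.of_free
    obtain ⟨φ, hφ⟩ := Module.projective_lifting_property (e.app x).hom
      ((f.app x).hom.comp (Finsupp.lsingle (𝟙 x))) hsurj
    refine ⟨fromFree m G k φ, ?_⟩
    apply NatTrans.ext; funext y
    apply ModuleCat.hom_ext
    apply Finsupp.lhom_ext
    intro α w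
    show (e.app y).hom ((Finsupp.lsum k (fun β : x ⟶ y => (E.map β).hom.comp φ)) (Finsupp.single α w))
      = (f.app y).hom (Finsupp.single α w)
    rw [Finsupp.lsum_single, LinearMap.comp_apply]
    have h1 : (e.app y).hom ((E.map α).hom (φ w)) = (X.map α).hom ((e.app x).hom (φ w)) :=
      congrFun (congrArg (fun (t : E.obj x ⟶ X.obj y) => ⇑t.hom) (e.naturality α)) (φ w)
    have h2 : (e.app x).hom (φ w) = (f.app x).hom (Finsupp.single (𝟙 x) w) :=
      congrFun (congrArg (fun (t : W →ₗ[k] X.obj x) => ⇑t) hφ) w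
    have h3 : (X.map α).hom ((f.app x).hom (Finsupp.single (𝟙 x) w))
        = (f.app y).hom (((freeAt m G k x W).map α).hom (Finsupp.single (𝟙 x) w)) :=
      (congrFun (congrArg (fun (t : (freeAt m G k x W).obj x ⟶ X.obj y) => ⇑t.hom)
        (f.naturality α)) (Finsupp.single (𝟙 x) w)).symm
    have h4 : ((freeAt m G k x W).map α).hom (Finsupp.single (𝟙 x) w) = Finsupp.single α w := by
      show Finsupp.mapDomain (fun β : x ⟶ x => β ≫ α) (Finsupp.single (𝟙 x) w)
        = Finsupp.single α w
      rw [Finsupp.mapDomain_single, Category.id_comp]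
    rw [h1, h2, h3, h4]

lemma projective_sigma {J : Type} (f : J → ModG m G k) [HasCoproduct f]
    (h : ∀ j, Projective (f j)) : Projective (∐ f) where
  factors {E X} g e he := by
    refine ⟨Sigma.desc fun j => (h j).factors (Sigma.ι f j ≫ g) e |>.choose, ?_⟩
    apply Sigma.hom_ext
    intro j
    rw [← Category.assoc, colimit.ι_desc]
    exact ((h j).factors (Sigma.ι f j ≫ g) e).choose_spec

/-- The canonical projective cover `⊕_x M(x) ⊗ V(x) ⟶ V`. -/
def coverHom (V : ModG m G k) : (∐ fun x : FImG m G => freeAt m G k x (V.obj x)) ⟶ V :=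
  Sigma.desc fun x => fromFree m G k LinearMap.id

instance coverHom_epi (V : ModG m G k) : Epi (coverHom m G k V) := by
  haveI : ∀ y : FImG m G, Epi ((coverHom m G k V).app y) := by
    intro y
    rw [ModuleCat.epi_iff_surjective]
    intro v
    refine ⟨(Sigma.ι (fun x : FImG m G => freeAt m G k x (V.obj x)) y).app y
      (Finsupp.single (𝟙 y) v), ?_⟩
    have h1 : Sigma.ι (fun x : FImG m G => freeAt m G k x (V.obj x)) y ≫ coverHom m G k V
        = fromFree m G k LinearMap.id := colimit.ι_desc _ _
    have h2 := congrFun (congrArg (fun (t : freeAt m G k y (V.obj y) ⟶ V) => ⇑(t.app y)) h1)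
      (Finsupp.single (𝟙 y) v)
    refine Eq.trans ?_ (h2.trans ?_)
    · rfl
    · show (Finsupp.lsum k (fun α : y ⟶ y => (V.map α).hom.comp LinearMap.id)) (Finsupp.single (𝟙 y) v) = v
      rw [Finsupp.lsum_single, LinearMap.comp_apply, LinearMap.id_apply, V.map_id]
      rfl
  exact NatTrans.epi_of_epi_app _

instance : EnoughProjectives (ModG m G k) where
  presentation V := ⟨{
    p := ∐ fun x : FImG m G => freeAt m G k x (V.obj x)
    projective := projective_sigma m G k _ fun x => freeAt_projective m G k x (V.obj x)
    f := coverHom m G k V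
    epi := coverHom_epi m G k V }⟩

/-- The `i`-th `S`-homology functor `H_i^S`, the `i`-th left derived functor of `H_0^S`. -/
def HiS (S : Finset (Fin m)) (i : ℕ) : ModG m G k ⥤ ModG m G k :=
  (H0S m G k S).leftDerived i

/-- The slice `W[[s]]` of a module on the object `s` of `C^S` is nonzero. -/
def SliceNonzero (S : Finset (Fin m)) (W : ModG m G k) (s : Fin m → ℕ) : Prop :=
  ∃ x : FImG m G, (∀ j ∈ S, x.1.comp j = s j) ∧ Nontrivial (W.obj x)

/-- The `i`-th `S`-homological degree `t_i^S(V)`, the supremum of the `S`-degrees of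
objects `s` of `C^S` with `H_i^S(V)[[s]] ≠ 0` (with `⊥` playing the role of `−1` when
there is no such object). -/
def tS (S : Finset (Fin m)) (i : ℕ) (V : ModG m G k) : WithBot ℕ∞ :=
  sSup ((fun s : Fin m → ℕ => (((∑ j ∈ S, s j : ℕ) : ℕ∞) : WithBot ℕ∞)) ''
    {s | SliceNonzero m G k S ((HiS m G k S i).obj V) s})

/-! ### Plain `C^m`-modules (no group factor) -/

/-- The category of `C^m`-modules over `k`. -/
abbrev ModM := FImObj m ⥤ ModuleCat.{0} k

instance : HasFiniteBiproducts (ModM m k) := Abelian.hasFiniteBiproducts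

/-- The category of `C`-modules (`FI`-modules) over `k`. -/
abbrev ModC := FIObj ⥤ ModuleCat.{0} k

instance : HasFiniteBiproducts (ModC k) := Abelian.hasFiniteBiproducts

/-- The shift functor `Σ_e` on `C^m`-modules. -/
def sigmaFM (e : Fin m → ℕ) : ModM m k ⥤ ModM m k :=
  (Functor.whiskeringLeft _ _ _).obj (addF m e)

/-- The canonical inclusion `x ⟶ ι_e(x)` in `C^m`. -/
def incHomM (e : Fin m → ℕ) (x : FImObj m) : x ⟶ (addF m e).obj x :=
  fun j => ⟨Fin.castAdd (e j), fun u v huv => Fin.castAdd_injective _ _ huv⟩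

lemma incHomM_naturality (e : Fin m → ℕ) {x y : FImObj m} (f : x ⟶ y) :
    incHomM m e x ≫ (addF m e).map f = f ≫ incHomM m e y := by
  funext j
  ext t
  exact congrArg Fin.val (shiftEmb_castAdd (e j) (f j) t)

/-- The natural inclusion `V ⟶ Σ_e V` for a `C^m`-module `V`. -/
def incMapVM (e : Fin m → ℕ) (V : ModM m k) : V ⟶ (sigmaFM m k e).obj V where
  app x := V.map (incHomM m e x)
  naturality x y f := by
    dsimp [sigmaFM]
    rw [← V.map_comp, ← V.map_comp, incHomM_naturality]

/-- The derivative `D_e V`, the cokernel of `V ⟶ Σ_e V`, for a `C^m`-module `V`. -/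
def DobjM (e : Fin m → ℕ) (V : ModM m k) : ModM m k :=
  cokernel (incMapVM m k e V)

/-- The free `C^m`-module `M(x)` at the object `x`. -/
def RepMM (x : FImObj m) : ModM m k :=
  coyoneda.obj (Opposite.op x) ⋙ ModuleCat.free k

/-- Finite generation for `C^m`-modules. -/
def FinitelyGeneratedM (V : ModM m k) : Prop :=
  ∃ (r : ℕ) (xs : Fin r → FImObj m) (p : (⨁ fun a => RepMM m k (xs a)) ⟶ V), Epi p

/-- The free `C`-module `M(x)` at an object `x` of `FI`. -/
def RepMC (x : FIObj) : ModC k :=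
  coyoneda.obj (Opposite.op x) ⋙ ModuleCat.free k

/-- Finite generation for `C`-modules. -/
def FinitelyGeneratedC (V : ModC k) : Prop :=
  ∃ (r : ℕ) (xs : Fin r → FIObj) (p : (⨁ fun a => RepMC k (xs a)) ⟶ V), Epi p

/-- The external tensor product `I₁ ⊠ ⋯ ⊠ I_m` of `C`-modules, a `C^m`-module. -/
def extProd (I : Fin m → ModC k) : ModM m k where
  obj x := ModuleCat.of k (⨂[k] j, (I j).obj ⟨x.comp j⟩)
  map {x y} f := ModuleCat.ofHom (PiTensorProduct.map (fun j => ((I j).map (f j)).hom))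
  map_id x := by
    have h : (fun j => ((I j).map ((𝟙 x : x ⟶ x) j)).hom) = fun j => LinearMap.id := by
      funext j
      show ((I j).map (𝟙 (⟨x.comp j⟩ : FIObj))).hom = LinearMap.id
      rw [(I j).map_id]
      rfl
    apply ModuleCat.hom_ext
    show PiTensorProduct.map (fun j => ((I j).map ((𝟙 x : x ⟶ x) j)).hom) = _
    rw [h, PiTensorProduct.map_id]
    rfl
  map_comp {x y z} f g := by
    have h : (fun j => ((I j).map ((f ≫ g) j)).hom)
        = fun j => ((I j).map (g j)).hom.comp ((I j).map (f j)).hom := by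
      funext j
      show ((I j).map ((f j : (⟨x.comp j⟩ : FIObj) ⟶ ⟨y.comp j⟩) ≫ (g j))).hom = _
      rw [(I j).map_comp]
      rfl
    apply ModuleCat.hom_ext
    show PiTensorProduct.map (fun j => ((I j).map ((f ≫ g) j)).hom) = _
    rw [h, PiTensorProduct.map_comp]
    rfl

/-- The `C^m_G`-module `V ⊠ kG`, where `kG` carries the (left regular) `G`-action. -/
def tensorG (V : ModM m k) : ModG m G k where
  obj x := ModuleCat.of k (TensorProduct k (V.obj x.1) (G →₀ k))
  map {x y} f := ModuleCat.ofHom (TensorProduct.map (V.map f.1).hom (Finsupp.lmapDomain k k (f.2 • · : G → G)))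
  map_id x := by
    have h1 : (V.map (𝟙 x.1)).hom = LinearMap.id := by rw [V.map_id]; rfl
    have h2 : Finsupp.lmapDomain k k ((1 : G) • · : G → G) = LinearMap.id := by
      ext; simp
    apply ModuleCat.hom_ext
    show TensorProduct.map (V.map (𝟙 x.1)).hom (Finsupp.lmapDomain k k ((1 : G) • · : G → G)) = _
    rw [h1, h2, TensorProduct.map_id]
    rfl
  map_comp {x y z} f g := by
    have h1 : (V.map ((f ≫ g).1)).hom = (V.map g.1).hom.comp (V.map f.1).hom := by
      rw [show (f ≫ g).1 = f.1 ≫ g.1 from rfl, V.map_comp]; rfl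
    have h2 : Finsupp.lmapDomain k k (((f ≫ g).2) • · : G → G)
        = (Finsupp.lmapDomain k k (g.2 • · : G → G)).comp (Finsupp.lmapDomain k k (f.2 • · : G → G)) := by
      show Finsupp.lmapDomain k k ((g.2 * f.2) • · : G → G) = _
      rw [← Finsupp.lmapDomain_comp]
      congr 1
      funext a
      exact mul_smul _ _ _
    apply ModuleCat.hom_ext
    show TensorProduct.map (V.map ((f ≫ g).1)).hom (Finsupp.lmapDomain k k (((f ≫ g).2) • · : G → G)) = _
    rw [h1, h2, TensorProduct.map_comp]
    rfl

end

/-! The counit `ε : F_s(V[[s]]) ⟶ V` is an epimorphism because `V` is generated by `V[[s]]`; it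
remains to see that its kernel `K` vanishes. Every object off the slice receives only morphisms of
positive `S`-degree from the slice, so there `F_s(V[[s]])`, and hence `V`, lies in `𝔍_S`: thus
`H_0^S(V)` lives in `S`-degrees `≤ deg s`, and by hypothesis so does `H_1^S(V)`. Below the slice
`F_s(V[[s]])` vanishes and on the slice `ε` is bijective; in `S`-degree `> deg s` a diagram chase
through a projective resolution of `V`, using `H_1^S(V)(x) = 0`, gives `K(x) ⊆ (𝔍_S K)(x)`. Since the
generators of `𝔍_S K` come from strictly smaller `S`-degree, induction on the `S`-degree
(Nakayama's lemma) forces `K = 0`. -/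

lemma ModuleCat.iSup_range_ι_eq_top {R : Type*} [Ring R] {J : Type*} [Category* J]
    {D : J ⥤ ModuleCat R} {c : Cocone D} (hc : IsColimit c) :
    ⨆ j, LinearMap.range (show D.obj j ⟶ c.pt from c.ι.app j).hom = ⊤ := by
  set N := ⨆ j, LinearMap.range (show D.obj j ⟶ c.pt from c.ι.app j).hom
  have hq : ModuleCat.ofHom N.mkQ = 0 :=
    hc.hom_ext fun j => by
      ext a
      simpa using le_iSup (fun j => LinearMap.range (show D.obj j ⟶ c.pt from c.ι.app j).hom)
        j ⟨a, rfl⟩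
  rw [← N.ker_mkQ, show N.mkQ = 0 from congrArg ModuleCat.Hom.hom hq, LinearMap.ker_zero]

section SliceInduction

variable {m : ℕ} {G : Type} [Group G] {k : Type} [Field k] {S : Finset (Fin m)}

variable (S) in
def objDegS (x : FImG m G) : ℕ := ∑ j ∈ S, x.1.comp j

lemma objDegS_lt_of_degS_pos {x y : FImG m G} {α : x ⟶ y} (h : 0 < degS m G S α) :
    objDegS S x < objDegS S y := by
  simp only [degS, objDegS, Finset.sum_sub_distrib, ← Nat.cast_sum] at h ⊢
  omega

lemma exists_comp_ne_of_sum_lt_objDegS {s : Fin m → ℕ} {x : FImG m G}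
    (hx : ∑ j ∈ S, s j < objDegS S x) : ∃ j ∈ S, x.1.comp j ≠ s j := by
  by_contra! h
  exact hx.ne (Finset.sum_congr rfl h).symm

variable (S) in
/-- `(𝔍_S T)(x)`, for a family `T` of subspaces of the values of `W` (in practice a subfunctor). -/
def JsubOf (W : ModG m G k) (T : ∀ z, Submodule k (W.obj z)) (x : FImG m G) :
    Submodule k (W.obj x) :=
  ⨆ (y : FImG m G) (α : y ⟶ x) (_ : 0 < degS m G S α), (T y).map (W.map α).hom

lemma map_mem_JsubOf {W : ModG m G k} {T : ∀ z, Submodule k (W.obj z)} {x y : FImG m G}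
    (α : y ⟶ x) (hα : 0 < degS m G S α) {w : W.obj y} (hw : w ∈ T y) :
    W.map α w ∈ JsubOf S W T x :=
  Submodule.mem_iSup_of_mem y <| Submodule.mem_iSup_of_mem α <|
    Submodule.mem_iSup_of_mem hα ⟨w, hw, rfl⟩

lemma JsubOf_le {W : ModG m G k} {T : ∀ z, Submodule k (W.obj z)} {x : FImG m G}
    {N : Submodule k (W.obj x)}
    (h : ∀ (y : FImG m G) (α : y ⟶ x), 0 < degS m G S α → ∀ w ∈ T y, W.map α w ∈ N) :
    JsubOf S W T x ≤ N :=
  iSup_le fun y => iSup_le fun α => iSup_le fun hα =>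
    Submodule.map_le_iff_le_comap.2 fun w hw => h y α hα w hw

lemma Jsub_eq_JsubOf_top (W : ModG m G k) (x : FImG m G) :
    Jsub m G k S W x = JsubOf S W (fun _ => ⊤) x := by
  simp only [Jsub, JsubOf, Submodule.map_top]

lemma map_mem_Jsub {W : ModG m G k} {x y : FImG m G} (α : y ⟶ x) (hα : 0 < degS m G S α)
    (w : W.obj y) : W.map α w ∈ Jsub m G k S W x := by
  rw [Jsub_eq_JsubOf_top]
  exact map_mem_JsubOf α hα Submodule.mem_top

lemma Jsub_le {W : ModG m G k} {x : FImG m G} {N : Submodule k (W.obj x)}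
    (h : ∀ (y : FImG m G) (α : y ⟶ x), 0 < degS m G S α → ∀ w, W.map α w ∈ N) :
    Jsub m G k S W x ≤ N := by
  rw [Jsub_eq_JsubOf_top]
  exact JsubOf_le fun y α hα w _ => h y α hα w

lemma JsubOf_le_comap {A B : ModG m G k} (φ : A ⟶ B) {T : ∀ z, Submodule k (A.obj z)}
    {T' : ∀ z, Submodule k (B.obj z)} (hT : ∀ z, T z ≤ (T' z).comap (φ.app z).hom)
    (x : FImG m G) : JsubOf S A T x ≤ (JsubOf S B T' x).comap (φ.app x).hom :=
  JsubOf_le fun y α hα w hw => by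
    change φ.app x (A.map α w) ∈ JsubOf S B T' x
    rw [NatTrans.naturality_apply]
    exact map_mem_JsubOf α hα (hT y hw)

/-- Nakayama's lemma: the generators of `𝔍_S T` come from objects of smaller `S`-degree. -/
lemma eq_bot_of_le_JsubOf {W : ModG m G k} {T : ∀ z, Submodule k (W.obj z)}
    (hT : ∀ x, T x ≤ JsubOf S W T x) (x : FImG m G) : T x = ⊥ := by
  induction hx : objDegS S x using Nat.strong_induction_on generalizing x with
  | _ n ih =>
    refine eq_bot_iff.2 ((hT x).trans (JsubOf_le fun y α hα w hw => ?_))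
    rw [ih _ (hx ▸ objDegS_lt_of_degS_pos hα) y rfl, Submodule.mem_bot] at hw
    simp [hw]

lemma surjective_app_of_epi {A B : ModG m G k} {φ : A ⟶ B} (hφ : Epi φ) (x : FImG m G) :
    Function.Surjective (φ.app x) :=
  (ModuleCat.epi_iff_surjective _).1 ((NatTrans.epi_iff_epi_app φ).1 hφ x)

lemma Jsub_le_map_of_surjective {A B : ModG m G k} (φ : A ⟶ B)
    (hφ : ∀ y, Function.Surjective (φ.app y)) (x : FImG m G) :
    Jsub m G k S B x ≤ (Jsub m G k S A x).map (φ.app x).hom :=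
  Jsub_le fun y α hα w => by
    obtain ⟨a, rfl⟩ := hφ y w
    exact ⟨A.map α a, map_mem_Jsub α hα a, NatTrans.naturality_apply φ α a⟩

lemma Jsub_eq_top_of_surjective {A B : ModG m G k} (φ : A ⟶ B) {x : FImG m G}
    (hφ : Function.Surjective (φ.app x)) (hA : Jsub m G k S A x = ⊤) :
    Jsub m G k S B x = ⊤ :=
  eq_top_iff.2 fun b _ => by
    obtain ⟨a, rfl⟩ := hφ b
    exact Jsub_le_comap_app m G k S φ x (hA ▸ Submodule.mem_top)

section Induction

variable {s : Fin m → ℕ}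

instance : (inclR m G S s).Full := inferInstanceAs (ObjectProperty.ι _).Full

instance : (inclR m G S s).Faithful := inferInstanceAs (ObjectProperty.ι _).Faithful

lemma le_comp_of_costructuredArrow {x : FImG m G} (g : CostructuredArrow (inclR m G S s) x)
    {j : Fin m} (hj : j ∈ S) : s j ≤ x.1.comp j :=
  g.left.2 j hj ▸ comp_le_of_hom m G g.hom j

lemma degS_costructuredArrow_pos {x : FImG m G} (hx : ∃ j ∈ S, x.1.comp j ≠ s j)
    (g : CostructuredArrow (inclR m G S s) x) : 0 < degS m G S g.hom := by
  obtain ⟨j, hj, hne⟩ := hx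
  refine Finset.sum_pos' (fun i _ => sub_nonneg.2 (by exact_mod_cast comp_le_of_hom m G g.hom i))
    ⟨j, hj, ?_⟩
  have hle := le_comp_of_costructuredArrow g hj
  have hsrc : ((inclR m G S s).obj g.left).1.comp j = s j := g.left.2 j hj
  have htgt : ((Functor.fromPUnit x).obj g.right).1.comp j = x.1.comp j := rfl
  omega

lemma iSup_range_indF_obj_map_eq_top (W : Rcat m G S s ⥤ ModuleCat.{0} k) (x : FImG m G) :
    ⨆ g : CostructuredArrow (inclR m G S s) x,
      LinearMap.range (((indF m G k S s).obj W).map g.hom).hom = ⊤ := by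
  refine eq_top_iff.2 ((ModuleCat.iSup_range_ι_eq_top
    ((inclR m G S s).isPointwiseLeftKanExtensionLeftKanExtensionUnit W x)).ge.trans ?_)
  refine iSup_mono fun g => ?_
  rintro _ ⟨a, rfl⟩
  exact ⟨_, rfl⟩

lemma Jsub_indF_obj_eq_top (W : Rcat m G S s ⥤ ModuleCat.{0} k) {x : FImG m G}
    (hx : ∃ j ∈ S, x.1.comp j ≠ s j) : Jsub m G k S ((indF m G k S s).obj W) x = ⊤ := by
  rw [eq_top_iff, ← iSup_range_indF_obj_map_eq_top W x]
  refine iSup_le fun g => ?_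
  rintro _ ⟨a, rfl⟩
  exact map_mem_Jsub g.hom (degS_costructuredArrow_pos hx g) a

lemma subsingleton_indF_obj_obj (W : Rcat m G S s ⥤ ModuleCat.{0} k) {x : FImG m G}
    (hx : ∃ j ∈ S, x.1.comp j < s j) : Subsingleton (((indF m G k S s).obj W).obj x) := by
  obtain ⟨j, hj, hlt⟩ := hx
  have : IsEmpty (CostructuredArrow (inclR m G S s) x) :=
    ⟨fun g => (le_comp_of_costructuredArrow g hj).not_gt hlt⟩
  have h := iSup_range_indF_obj_map_eq_top W x
  rw [iSup_of_empty] at h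
  exact (Submodule.subsingleton_iff k).1 (subsingleton_iff_bot_eq_top.1 h)

variable (S s) in
noncomputable abbrev sliceCounit (V : ModG m G k) :
    (indF m G k S s).obj (inclR m G S s ⋙ V) ⟶ V :=
  ((inclR m G S s).lanAdjunction (ModuleCat.{0} k)).counit.app V

/-- On the slice, the counit is inverse to the unit, which is invertible as `inclR` is fully
faithful. -/
lemma injective_sliceCounit_app (V : ModG m G k) {x : FImG m G}
    (hx : ∀ j ∈ S, x.1.comp j = s j) : Function.Injective ((sliceCounit S s V).app x) := by
  let y : Rcat m G S s := ⟨x, hx⟩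
  let u := ((inclR m G S s).lanUnit.app (inclR m G S s ⋙ V)).app y
  change Function.Injective ((sliceCounit S s V).app ((inclR m G S s).obj y))
  rw [IsIso.eq_inv_of_hom_inv_id ((inclR m G S s).lanUnit_app_app_lanAdjunction_counit_app_app V y)]
  exact (ConcreteCategory.bijective_of_isIso (inv u)).1

lemma Jsub_eq_top_of_generatedBySlice {V : ModG m G k} (hgen : GeneratedBySlice m G k S s V)
    {x : FImG m G} (hx : ∃ j ∈ S, x.1.comp j ≠ s j) : Jsub m G k S V x = ⊤ :=
  Jsub_eq_top_of_surjective _ (surjective_app_of_epi hgen x) (Jsub_indF_obj_eq_top _ hx)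

end Induction

section Resolution

variable {V : ModG m G k} (P : ProjectiveResolution V)

noncomputable abbrev CategoryTheory.ProjectiveResolution.augmentation : P.complex.X 0 ⟶ V :=
  P.π.f 0 ≫ (HomologicalComplex.singleObjXSelf (ComplexShape.down ℕ) 0 V).hom

lemma CategoryTheory.ProjectiveResolution.surjective_augmentation_app (x : FImG m G) :
    Function.Surjective (P.augmentation.app x) :=
  surjective_app_of_epi (epi_comp _ _) x

lemma CategoryTheory.ProjectiveResolution.d_comp_augmentation :
    P.complex.d 1 0 ≫ P.augmentation = 0 := by
  rw [← Category.assoc, P.complex_d_comp_π_f_zero, zero_comp]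

lemma CategoryTheory.ProjectiveResolution.exists_d_app_eq_of_augmentation_app_eq_zero
    {x : FImG m G} {q : (P.complex.X 0).obj x} (hq : P.augmentation.app x q = 0) :
    ∃ r, (P.complex.d 1 0).app x r = q := by
  have hex := P.exact₀.map ((evaluation (FImG m G) (ModuleCat.{0} k)).obj x)
  rw [ShortComplex.moduleCat_exact_iff] at hex
  refine hex q ((ModuleCat.mono_iff_injective
    ((HomologicalComplex.singleObjXSelf (ComplexShape.down ℕ) 0 V).hom.app x)).1 inferInstance ?_)
  exact hq.trans (map_zero _).symm

variable (S) in
noncomputable def hiSObjObjIsoHomology (x : FImG m G) {a b c : ℕ}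
    (hab : (ComplexShape.down ℕ).prev b = a) (hbc : (ComplexShape.down ℕ).next b = c) :
    ((HiS m G k S b).obj V).obj x ≅
      (((((H0S m G k S).mapHomologicalComplex _).obj P.complex).sc' a b c).map
        ((evaluation (FImG m G) (ModuleCat.{0} k)).obj x)).homology :=
  ((evaluation (FImG m G) (ModuleCat.{0} k)).obj x).mapIso
      (P.isoLeftDerivedObj (H0S m G k S) b ≪≫
        ShortComplex.homologyMapIso
          ((((H0S m G k S).mapHomologicalComplex _).obj P.complex).isoSc' a b c hab hbc)) ≪≫
    (ShortComplex.mapHomologyIso _ _).symm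

lemma subsingleton_HiS_obj_obj_iff (x : FImG m G) {a b c : ℕ}
    (hab : (ComplexShape.down ℕ).prev b = a) (hbc : (ComplexShape.down ℕ).next b = c) :
    Subsingleton (((HiS m G k S b).obj V).obj x) ↔
      ∀ q, (P.complex.d b c).app x q ∈ Jsub m G k S (P.complex.X c) x →
        ∃ r, q - (P.complex.d a b).app x r ∈ Jsub m G k S (P.complex.X b) x := by
  rw [← ModuleCat.isZero_iff_subsingleton, (hiSObjObjIsoHomology S P x hab hbc).isZero_iff,
    ← ShortComplex.exact_iff_isZero_homology, ShortComplex.moduleCat_exact_iff]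
  refine ⟨fun h q hq => ?_, fun h q' hq' => ?_⟩
  · obtain ⟨r', hr'⟩ := h (Submodule.Quotient.mk q) ((Submodule.Quotient.mk_eq_zero _).2 hq)
    obtain ⟨r, rfl⟩ := Submodule.Quotient.mk_surjective _ r'
    exact ⟨r, by simpa using (Submodule.Quotient.eq _).1 hr'.symm⟩
  · obtain ⟨q, rfl⟩ := Submodule.Quotient.mk_surjective _ q'
    obtain ⟨r, hr⟩ := h q ((Submodule.Quotient.mk_eq_zero _).1 hq')
    exact ⟨Submodule.Quotient.mk r, ((Submodule.Quotient.eq _).2 (by simpa using hr)).symm⟩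

end Resolution

lemma subsingleton_HiS_zero_of_Jsub_eq_top {V : ModG m G k} {x : FImG m G}
    (hV : Jsub m G k S V x = ⊤) : Subsingleton (((HiS m G k S 0).obj V).obj x) := by
  obtain ⟨P⟩ := HasProjectiveResolution.out (Z := V)
  refine (subsingleton_HiS_obj_obj_iff P x (a := 1) (c := 0) (by simp) (by simp)).2
    fun q _ => ?_
  obtain ⟨c, hc, hcq⟩ := Jsub_le_map_of_surjective _ P.surjective_augmentation_app x
    (hV ▸ Submodule.mem_top : P.augmentation.app x q ∈ Jsub m G k S V x)
  obtain ⟨r, hr⟩ := P.exists_d_app_eq_of_augmentation_app_eq_zero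
    (show P.augmentation.app x (q - c) = 0 by rw [map_sub]; exact sub_eq_zero.2 hcq.symm)
  exact ⟨r, by rwa [hr, sub_sub_cancel]⟩

lemma tS_le_of_subsingleton {i d : ℕ} {V : ModG m G k}
    (h : ∀ x : FImG m G, d < objDegS S x → Subsingleton (((HiS m G k S i).obj V).obj x)) :
    tS m G k S i V ≤ ((d : ℕ∞) : WithBot ℕ∞) := by
  refine sSup_le ?_
  rintro _ ⟨s, ⟨x, hxs, hx⟩, rfl⟩
  have hle : objDegS S x ≤ d := not_lt.1 fun hlt =>
    not_nontrivial_iff_subsingleton.2 (h x hlt) hx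
  rw [objDegS, Finset.sum_congr rfl hxs] at hle
  exact WithBot.coe_le_coe.2 (ENat.natCast_le_natCast.2 hle)

lemma objDegS_le_tS {i : ℕ} {V : ModG m G k} {x : FImG m G}
    (hx : Nontrivial (((HiS m G k S i).obj V).obj x)) :
    ((objDegS S x : ℕ∞) : WithBot ℕ∞) ≤ tS m G k S i V :=
  le_sSup ⟨fun j => x.1.comp j, ⟨x, fun _ _ => rfl, hx⟩, rfl⟩

lemma tS_zero_le_of_generatedBySlice {s : Fin m → ℕ} {V : ModG m G k}
    (hgen : GeneratedBySlice m G k S s V) :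
    tS m G k S 0 V ≤ (((∑ j ∈ S, s j : ℕ) : ℕ∞) : WithBot ℕ∞) :=
  tS_le_of_subsingleton fun _ hx => subsingleton_HiS_zero_of_Jsub_eq_top
    (Jsub_eq_top_of_generatedBySlice hgen (exists_comp_ne_of_sum_lt_objDegS hx))

lemma subsingleton_HiS_one_of_tS_one_le_tS_zero {s : Fin m → ℕ} {V : ModG m G k}
    (hgen : GeneratedBySlice m G k S s V) (h : tS m G k S 1 V ≤ tS m G k S 0 V)
    {x : FImG m G} (hx : ∑ j ∈ S, s j < objDegS S x) :
    Subsingleton (((HiS m G k S 1).obj V).obj x) := by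
  by_contra hnt
  have := (objDegS_le_tS (not_subsingleton_iff_nontrivial.1 hnt)).trans
    (h.trans (tS_zero_le_of_generatedBySlice hgen))
  exact hx.not_ge (by exact_mod_cast this)

section Kernel

variable {F V : ModG m G k} (ε : F ⟶ V)

lemma JsubOf_ker_le_ker (x : FImG m G) :
    JsubOf S F (fun z => LinearMap.ker (ε.app z).hom) x ≤ LinearMap.ker (ε.app x).hom :=
  JsubOf_le fun y α _ w hw => by
    change ε.app x (F.map α w) = 0
    rw [NatTrans.naturality_apply, LinearMap.mem_ker.1 hw, map_zero]

lemma Jsub_le_comap_JsubOf_ker {A : ModG m G k} (φ : A ⟶ F) (hφ : φ ≫ ε = 0) (x : FImG m G) :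
    Jsub m G k S A x ≤
      (JsubOf S F (fun z => LinearMap.ker (ε.app z).hom) x).comap (φ.app x).hom :=
  Jsub_eq_JsubOf_top (S := S) A x ▸ JsubOf_le_comap φ (fun z w _ => by
    change ε.app z (φ.app z w) = 0
    rw [← ConcreteCategory.comp_apply, ← NatTrans.comp_app, hφ, NatTrans.app_zero]
    rfl) x

lemma Jsub_le_map_sup_JsubOf_ker {P : ModG m G k} (σ : P ⟶ F)
    (hσ : ∀ y, Function.Surjective ((σ ≫ ε).app y)) (x : FImG m G) :
    Jsub m G k S F x ≤ (Jsub m G k S P x).map (σ.app x).hom ⊔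
      JsubOf S F (fun z => LinearMap.ker (ε.app z).hom) x :=
  Jsub_le fun y α hα w => by
    obtain ⟨p, hp⟩ := hσ y (ε.app y w)
    have hdecomp : F.map α w = σ.app x (P.map α p) + F.map α (w - σ.app y p) := by
      rw [map_sub, NatTrans.naturality_apply, add_sub_cancel]
    rw [hdecomp]
    refine Submodule.add_mem_sup ⟨_, map_mem_Jsub α hα p, rfl⟩ (map_mem_JsubOf α hα ?_)
    rw [LinearMap.mem_ker, map_sub]
    exact sub_eq_zero.2 hp.symm

lemma ker_le_JsubOf_ker (hε : Epi ε) {x : FImG m G} (hF : Jsub m G k S F x = ⊤)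
    (hV : Subsingleton (((HiS m G k S 1).obj V).obj x)) :
    LinearMap.ker (ε.app x).hom ≤ JsubOf S F (fun z => LinearMap.ker (ε.app z).hom) x := by
  obtain ⟨P⟩ := HasProjectiveResolution.out (Z := V)
  let σ : P.complex.X 0 ⟶ F := Projective.factorThru P.augmentation ε
  have hσ : σ ≫ ε = P.augmentation := Projective.factorThru_comp _ _
  intro v hv
  obtain ⟨_, ⟨p, hp, rfl⟩, w, hw, rfl⟩ := Submodule.mem_sup.1 <|
    Jsub_le_map_sup_JsubOf_ker ε σ (hσ ▸ P.surjective_augmentation_app) x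
      (hF ▸ Submodule.mem_top : v ∈ Jsub m G k S F x)
  have hp0 : P.augmentation.app x p = 0 := by
    rw [← hσ, NatTrans.comp_app, ConcreteCategory.comp_apply]
    rwa [LinearMap.mem_ker, map_add, JsubOf_ker_le_ker ε x hw, add_zero] at hv
  -- `p = d₁ q`, and `H_1^S(V)(x) = 0` moves `q` into `𝔍_S P₁` modulo the image of `d₂`
  obtain ⟨q, rfl⟩ := P.exists_d_app_eq_of_augmentation_app_eq_zero hp0
  obtain ⟨r, hr⟩ := (subsingleton_HiS_obj_obj_iff P x (a := 2) (c := 0) (by simp) (by simp)).1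
    hV q hp
  have hdd : (P.complex.d 1 0).app x ((P.complex.d 2 1).app x r) = 0 := by
    rw [← ConcreteCategory.comp_apply, ← NatTrans.comp_app, P.complex.d_comp_d]
    rfl
  have hq : σ.app x ((P.complex.d 1 0).app x q)
      = (P.complex.d 1 0 ≫ σ).app x (q - (P.complex.d 2 1).app x r) := by
    change _ = σ.app x ((P.complex.d 1 0).app x (q - (P.complex.d 2 1).app x r))
    rw [map_sub, hdd, sub_zero]
  refine add_mem ?_ hw
  rw [hq]
  exact Jsub_le_comap_JsubOf_ker ε _ (by rw [Category.assoc, hσ, P.d_comp_augmentation]) x hr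

end Kernel

lemma ker_sliceCounit_app_le_JsubOf {s : Fin m → ℕ} {V : ModG m G k}
    (hgen : GeneratedBySlice m G k S s V) (h : tS m G k S 1 V ≤ tS m G k S 0 V) (x : FImG m G) :
    LinearMap.ker ((sliceCounit S s V).app x).hom ≤
      JsubOf S _ (fun z => LinearMap.ker ((sliceCounit S s V).app z).hom) x := by
  by_cases hlow : ∃ j ∈ S, x.1.comp j < s j
  · have := subsingleton_indF_obj_obj (inclR m G S s ⋙ V) hlow
    exact fun v _ => @Subsingleton.elim _ this v 0 ▸ zero_mem _
  by_cases hslice : ∀ j ∈ S, x.1.comp j = s j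
  · rw [LinearMap.ker_eq_bot.2 (injective_sliceCounit_app V hslice)]
    exact bot_le
  push Not at hlow hslice
  obtain ⟨j, hj, hne⟩ := hslice
  have hx : ∑ j ∈ S, s j < objDegS S x :=
    Finset.sum_lt_sum hlow ⟨j, hj, (hlow j hj).lt_of_ne hne.symm⟩
  exact ker_le_JsubOf_ker _ hgen (Jsub_indF_obj_eq_top _ ⟨j, hj, hne⟩)
    (subsingleton_HiS_one_of_tS_one_le_tS_zero hgen h hx)

end SliceInduction

theorem FIm.induced_of_t1_le_t0_general (m : ℕ) (G : Type) [Group G]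
    (k : Type) [Field k] (S : Finset (Fin m))
    (s : Fin m → ℕ) (V : ModG m G k)
    (hgen : GeneratedBySlice m G k S s V) (h : tS m G k S 1 V ≤ tS m G k S 0 V) :
    IsInduced m G k S V := by
  have hker : ∀ x, LinearMap.ker ((sliceCounit S s V).app x).hom = ⊥ :=
    eq_bot_of_le_JsubOf (ker_sliceCounit_app_le_JsubOf hgen h)
  have : Mono (sliceCounit S s V) := (NatTrans.mono_iff_mono_app _).2 fun x =>
    (ModuleCat.mono_iff_injective _).2 (LinearMap.ker_eq_bot.1 (hker x))
  have : Epi (sliceCounit S s V) := hgen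
  have : IsIso (sliceCounit S s V) := isIso_of_mono_of_epi _
  exact ⟨s, inclR m G S s ⋙ V, ⟨(asIso (sliceCounit S s V)).symm⟩⟩

theorem FIm.induced_of_t1_le_t0 (m : ℕ) (hm : 0 < m) (G : Type) [Group G] [Finite G]
    (k : Type) [Field k] [CharZero k] (S : Finset (Fin m)) (hS : S.Nonempty)
    (s : Fin m → ℕ) (V : ModG m G k) (hV : FinitelyGenerated m G k V)
    (hgen : GeneratedBySlice m G k S s V) (h : tS m G k S 1 V ≤ tS m G k S 0 V) :
    IsInduced m G k S V :=
  FIm.induced_of_t1_le_t0_general m G k S s V hgen h
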